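/- Let ω : [0,∞) → [0,∞) be an increasing unbounded function satisfying ω(t²) = O(ω(t)) as t → ∞, and let η be an increasing unbounded function with ω(t) = O(η(t)). Then there exist L ≥ 1 and s₀ ≥ 0 such that ω⁻¹(s/L)·η⁻¹(s/L) ≤ ω⁻¹(s)·ω⁻¹(s) ≤ ω⁻¹(Ls)·η⁻¹(Ls) for all s ≥ s₀, where ⁻¹ denotes generalized inverses. (This is the key inequality showing S^{[ω]}_{[η]} ≅ S^{[ω]}_{[ω]}.) -/
import Mathlib


open Filter Asymptotics

/-- Generalized inverse of an increasing function `f : [0,∞) → [0,∞)`: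
f⁻¹(s) = inf{t ≥ 0 : f(t) ≥ s}. -/
noncomputable def ginv (f : ℝ → ℝ) (s : ℝ) : ℝ := sInf {t : ℝ | 0 ≤ t ∧ s ≤ f t}

lemma ginv_nonneg (f : ℝ → ℝ) (s : ℝ) : 0 ≤ ginv f s :=
  Real.sInf_nonneg (fun x hx => hx.1)

lemma ginv_bdd (f : ℝ → ℝ) (s : ℝ) : BddBelow {t : ℝ | 0 ≤ t ∧ s ≤ f t} :=
  ⟨0, fun _ hx => hx.1⟩

lemma ginv_set_nonempty {f : ℝ → ℝ} (hf : Filter.Tendsto f atTop atTop) (s : ℝ) :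
    {t : ℝ | 0 ≤ t ∧ s ≤ f t}.Nonempty := by
  obtain ⟨t, h1, h2⟩ := ((hf.eventually_ge_atTop s).and (eventually_ge_atTop 0)).exists
  exact ⟨t, h2, h1⟩

lemma ginv_le {f : ℝ → ℝ} {s t : ℝ} (ht : 0 ≤ t) (h : s ≤ f t) : ginv f s ≤ t :=
  csInf_le (ginv_bdd f s) ⟨ht, h⟩

/-- if ω is increasing, unbounded, with ω(t²) = O(ω(t)), and η is
increasing unbounded with ω = O(η), then there are L ≥ 1, s₀ ≥ 0 such that
ω⁻¹(s/L)η⁻¹(s/L) ≤ ω⁻¹(s)ω⁻¹(s) ≤ ω⁻¹(Ls)η⁻¹(Ls) for all s ≥ s₀. -/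
theorem stmt14 (ω η : ℝ → ℝ)
    (hωm : MonotoneOn ω (Set.Ici 0)) (hωt : Tendsto ω atTop atTop)
    (hηm : MonotoneOn η (Set.Ici 0)) (hηt : Tendsto η atTop atTop)
    (h : ∃ L ≥ (1:ℝ), ∃ t₀ ≥ (0:ℝ), ∀ t ≥ t₀, ω (t ^ 2) ≤ L * ω t ∧ ω t ≤ L * η t) :
    ∃ L ≥ (1:ℝ), ∃ s₀ ≥ (0:ℝ), ∀ s ≥ s₀,
      ginv ω (s / L) * ginv η (s / L) ≤ ginv ω s * ginv ω s ∧
      ginv ω s * ginv ω s ≤ ginv ω (L * s) * ginv η (L * s) := by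
  obtain ⟨L, hL1, t₀, ht₀, hLt⟩ := h
  have hL0 : (0:ℝ) < L := lt_of_lt_of_le one_pos hL1
  set T : ℝ := max t₀ (t₀ ^ 2) with hT
  have hT0 : (0:ℝ) ≤ T := le_trans ht₀ (le_max_left _ _)
  have hTt₀ : t₀ ≤ T := le_max_left _ _
  set s₀ : ℝ := max (ω T + 1) (max (η 1 + 1) 1) with hs₀
  refine ⟨L, hL1, s₀, le_trans zero_le_one (le_trans (le_max_right _ _) (le_max_right _ _)), ?_⟩
  intro s hs
  have hs1 : (1:ℝ) ≤ s := le_trans (le_trans (le_max_right _ _) (le_max_right _ _)) hs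
  have hspos : (0:ℝ) < s := lt_of_lt_of_le one_pos hs1
  have hsωT : ω T < s := lt_of_lt_of_le (lt_add_one _) (le_trans (le_max_left _ _) hs)
  have hsη1 : η 1 < s := lt_of_lt_of_le (lt_add_one _)
    (le_trans (le_trans (le_max_left _ _) (le_max_right _ _)) hs)
  have hsLs : s ≤ L * s := le_mul_of_one_le_left hspos.le hL1
  -- any t with s ≤ ω t and 0 ≤ t satisfies T ≤ t
  have key : ∀ t : ℝ, 0 ≤ t → s ≤ ω t → T ≤ t := by
    intro t ht0 hts
    by_contra hlt
    push_neg at hlt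
    exact absurd (le_trans hts (hωm (Set.mem_Ici.2 ht0) (Set.mem_Ici.2 hT0) hlt.le))
      (not_le.2 hsωT)
  -- (1a) : ginv ω (s/L) ≤ ginv ω s
  have h1a : ginv ω (s / L) ≤ ginv ω s := by
    refine le_csInf (ginv_set_nonempty hωt s) (fun t ht => ?_)
    exact ginv_le ht.1 (le_trans (div_le_self hspos.le hL1) ht.2)
  -- (1b) : ginv η (s/L) ≤ ginv ω s
  have h1b : ginv η (s / L) ≤ ginv ω s := by
    refine le_csInf (ginv_set_nonempty hωt s) (fun t ht => ?_)
    have htT : T ≤ t := key t ht.1 ht.2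
    have hηbound : ω t ≤ L * η t := (hLt t (le_trans hTt₀ htT)).2
    refine ginv_le ht.1 ?_
    rw [div_le_iff₀ hL0]
    calc s ≤ ω t := ht.2
      _ ≤ L * η t := hηbound
      _ = η t * L := mul_comm _ _
  -- (2a) : ginv ω s * ginv ω s ≤ ginv ω (L*s)
  have h2a : ginv ω s * ginv ω s ≤ ginv ω (L * s) := by
    refine le_csInf (ginv_set_nonempty hωt (L * s)) (fun t ht => ?_)
    have htT : T ≤ t := key t ht.1 (le_trans hsLs ht.2)
    have hsq : t₀ ≤ Real.sqrt t := by
      have : t₀ ^ 2 ≤ t := le_trans (le_max_right _ _) htT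
      calc t₀ = Real.sqrt (t₀ ^ 2) := (Real.sqrt_sq ht₀).symm
        _ ≤ Real.sqrt t := Real.sqrt_le_sqrt this
    have hωsqrt : s ≤ ω (Real.sqrt t) := by
      have h1 := (hLt (Real.sqrt t) hsq).1
      rw [Real.sq_sqrt ht.1] at h1
      have : L * s ≤ L * ω (Real.sqrt t) := le_trans ht.2 h1
      exact le_of_mul_le_mul_left this hL0
    have hle : ginv ω s ≤ Real.sqrt t := ginv_le (Real.sqrt_nonneg t) hωsqrt
    calc ginv ω s * ginv ω s ≤ Real.sqrt t * Real.sqrt t :=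
          mul_self_le_mul_self (ginv_nonneg ω s) hle
      _ = t := Real.mul_self_sqrt ht.1
  -- (2b) : 1 ≤ ginv η (L*s)
  have h2b : (1:ℝ) ≤ ginv η (L * s) := by
    refine le_csInf (ginv_set_nonempty hηt (L * s)) (fun t ht => ?_)
    by_contra hlt
    push_neg at hlt
    have : η t ≤ η 1 := hηm (Set.mem_Ici.2 ht.1) (Set.mem_Ici.2 zero_le_one) hlt.le
    exact absurd (le_trans (le_trans hsLs ht.2) this) (not_le.2 hsη1)
  constructor
  · exact mul_le_mul h1a h1b (ginv_nonneg η _) (ginv_nonneg ω s)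
  · calc ginv ω s * ginv ω s ≤ ginv ω (L * s) := h2a
      _ ≤ ginv ω (L * s) * ginv η (L * s) :=
        le_mul_of_one_le_right (le_trans (mul_self_nonneg _) h2a) h2b
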